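/- (Total fixed points.) Let C be a target–context category with intrinsic behaviors, with evaluation morphism eval : T⊗C₀ → B. Suppose F : C₀⊗C₀ → B is total, and F is an A-complete parametrization (for some A) by total morphisms, i.e. for every f : A⊗C₀ → B there exists a functional and total c_f : A → C₀ with Beh(F∘(c_f⊗id_{C₀})) ⪰^im Beh(f). Then every morphism g : B → B has a total quasi-fixed point b : A → B. -/

import Mathlib

open CategoryTheory MonoidalCategory

universe w v u v' u'

/-- A gs-monoidal category: a symmetric monoidal category in which every object carries a
commutative comonoid structure (copy and discard), compatible with tensor products. -/
class GSCat (C : Type u) [Category.{v} C] [MonoidalCategory C] [SymmetricCategory C] where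
  copy : ∀ A : C, A ⟶ A ⊗ A
  discard : ∀ A : C, A ⟶ 𝟙_ C
  copy_assoc : ∀ A : C, copy A ≫ (copy A ▷ A) ≫ (α_ A A A).hom = copy A ≫ (A ◁ copy A)
  copy_comm : ∀ A : C, copy A ≫ (β_ A A).hom = copy A
  copy_counit_left : ∀ A : C, copy A ≫ (discard A ▷ A) ≫ (λ_ A).hom = 𝟙 A
  copy_counit_right : ∀ A : C, copy A ≫ (A ◁ discard A) ≫ (ρ_ A).hom = 𝟙 A
  copy_tensor : ∀ A X : C, copy (A ⊗ X) = (copy A ⊗ₘ copy X) ≫ tensorμ A A X X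
  discard_tensor : ∀ A X : C, discard (A ⊗ X) = (discard A ⊗ₘ discard X) ≫ (λ_ (𝟙_ C)).hom
  discard_unit : discard (𝟙_ C) = 𝟙 (𝟙_ C)

variable {C : Type u} [Category.{v} C] [MonoidalCategory C] [SymmetricCategory C] [GSCat C]

/-- The domain `dom(f) = ρ_A ∘ (id_A ⊗ (ε_X ∘ f)) ∘ Δ_A` of a morphism `f : A ⟶ X`. -/
def gsDom {A X : C} (f : A ⟶ X) : A ⟶ A :=
  GSCat.copy A ≫ (A ◁ (f ≫ GSCat.discard X)) ≫ (ρ_ A).hom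

/-- A morphism is normalized if `f ∘ dom(f) = f`. -/
def GsNormalized {A X : C} (f : A ⟶ X) : Prop := gsDom f ≫ f = f

/-- A morphism is functional if `Δ_X ∘ f = (f ⊗ f) ∘ Δ_A`. -/
def GsFunctional {A X : C} (f : A ⟶ X) : Prop :=
  f ≫ GSCat.copy X = GSCat.copy A ≫ (f ⊗ₘ f)

/-- A morphism is total if `ε_X ∘ f = ε_A`. -/
def GsTotal {A X : C} (f : A ⟶ X) : Prop := f ≫ GSCat.discard X = GSCat.discard A

/-- `f ⊒ g` : `f` agrees with `g` on the domain of `g`, i.e. `f ∘ dom(g) = g`. -/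
def GsRestrict {A X : C} (f g : A ⟶ X) : Prop := gsDom g ≫ f = g

/-- A gs-monoidal category is normalized if all of its morphisms are normalized. -/
class GsNormalizedCat (C : Type u) [Category.{v} C] [MonoidalCategory C]
    [SymmetricCategory C] [GSCat C] : Prop where
  norm : ∀ {A X : C} (f : A ⟶ X), GsNormalized f

/-- Composition of set-valued relations (first `f`, then `g`). -/
def RComp {α β γ : Type*} (f : α → Set β) (g : β → Set γ) : α → Set γ :=
  fun a => {c | ∃ b ∈ f a, c ∈ g b}

/-- Existence of an enhancement map `U → V` with respect to `pre`
(read `pre x y` as "`x ⪰ y`"): a map sending each `u ∈ U` to an element of `V` above it. -/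
def IsEnh {X : Type w} (pre : X → X → Prop) (U V : Set X) : Prop :=
  ∃ e : U → V, ∀ u : U, pre (e u : X) (u : X)

/-- Existence of a degradation map `V → U`: a map sending each `v ∈ V` to an element of `U`
below it. -/
def IsDeg {X : Type w} (pre : X → X → Prop) (U V : Set X) : Prop :=
  ∃ d : V → U, ∀ v : V, pre (v : X) (d v : X)

/-- The imitation relation: `ν` imitates `μ` iff for every `a` in the domain of `μ` there are
an enhancement map `μ a → ν a` and a degradation map `ν a → μ a`. -/
def Imitates {α : Type*} {X : Type w} (pre : X → X → Prop) (ν μ : α → Set X) : Prop :=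
  ∀ a : α, (μ a).Nonempty → IsEnh pre (μ a) (ν a) ∧ IsDeg pre (μ a) (ν a)

/-- A target--context category with intrinsic behaviors: a behavior structure (a lax
gs-monoidal functor to `Rel`, encoded concretely) for which the evaluation is the shadow
of a morphism `eval : T ⊗ C0 ⟶ B` of the ambient category, i.e. `Beh(eval)` is the
(graph of the) function `evalHat`, together with a preorder `brel` on `Beh(B)`. -/
structure IntrinsicBS (C : Type u) [Category.{v} C] [MonoidalCategory C]
    [SymmetricCategory C] [GSCat C] (T C0 B : C) where
  obj : C → Type w
  map : ∀ {A X : C}, (A ⟶ X) → obj A → Set (obj X)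
  map_id : ∀ {A : C} (a : obj A), map (𝟙 A) a = {a}
  map_comp : ∀ {A X Y : C} (f : A ⟶ X) (g : X ⟶ Y) (a : obj A),
    map (f ≫ g) a = {y | ∃ x ∈ map f a, y ∈ map g x}
  unitSet : Set (obj (𝟙_ C))
  mul : ∀ A X : C, obj A → obj X → Set (obj (A ⊗ X))
  mul_natural : ∀ {A A' X X' : C} (f : A ⟶ A') (g : X ⟶ X')
      (a : obj A) (x : obj X) (y : obj (A' ⊗ X')),
    (∃ a' ∈ map f a, ∃ x' ∈ map g x, y ∈ mul A' X' a' x') ↔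
      ∃ z ∈ mul A X a x, y ∈ map (f ⊗ₘ g) z
  mul_assoc : ∀ {A X Y : C} (a : obj A) (x : obj X) (y : obj Y) (u : obj (A ⊗ (X ⊗ Y))),
    (∃ z ∈ mul A X a x, ∃ v ∈ mul (A ⊗ X) Y z y, u ∈ map (α_ A X Y).hom v) ↔
      ∃ t ∈ mul X Y x y, u ∈ mul A (X ⊗ Y) a t
  mul_left_unit : ∀ {A : C} (a b : obj A),
    (∃ i ∈ unitSet, ∃ z ∈ mul (𝟙_ C) A i a, b ∈ map (λ_ A).hom z) ↔ b = a
  mul_right_unit : ∀ {A : C} (a b : obj A),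
    (∃ i ∈ unitSet, ∃ z ∈ mul A (𝟙_ C) a i, b ∈ map (ρ_ A).hom z) ↔ b = a
  mul_braiding : ∀ {A X : C} (a : obj A) (x : obj X) (u : obj (X ⊗ A)),
    (∃ z ∈ mul A X a x, u ∈ map (β_ A X).hom z) ↔ u ∈ mul X A x a
  map_copy : ∀ {A : C} (a : obj A), map (GSCat.copy A) a = mul A A a a
  map_discard : ∀ {A : C} (a : obj A), map (GSCat.discard A) a = unitSet
  eval : T ⊗ C0 ⟶ B
  evalHat : obj (T ⊗ C0) → obj B
  eval_beh : ∀ x : obj (T ⊗ C0), map eval x = {evalHat x}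
  brel : obj B → obj B → Prop
  brel_refl : ∀ b : obj B, brel b b
  brel_trans : ∀ {b₁ b₂ b₃ : obj B}, brel b₁ b₂ → brel b₂ b₃ → brel b₁ b₃

/-- The ambient imitation relation induced by an intrinsic behavior structure. -/
def IntrinsicBS.aim {T C0 B : C} (β : IntrinsicBS C T C0 B) {A : C}
    (f g : A ⟶ T ⊗ C0) : Prop :=
  Imitates β.brel (fun a => β.evalHat '' β.map f a) (fun a => β.evalHat '' β.map g a)

/-- `F : P ⊗ C0 ⟶ B` is an `A`-complete parametrization of maps `C0 → B` if every
`f : A ⊗ C0 ⟶ B` is parametrized, up to imitation, by a functional `p : A ⟶ P`. -/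
def IntrinsicBS.IsCompleteParam {T C0 B : C} (β : IntrinsicBS C T C0 B) (A P : C)
    (F : P ⊗ C0 ⟶ B) : Prop :=
  ∀ f : A ⊗ C0 ⟶ B, ∃ p : A ⟶ P, GsFunctional p ∧
    Imitates β.brel (β.map ((p ▷ C0) ≫ F)) (β.map f)

/-- `b : A ⟶ B` is a quasi-fixed point of `g : B ⟶ B` if `Beh(b) ⪰ᵢₘ Beh(g ∘ b)`. -/
def IntrinsicBS.QuasiFixed {T C0 B : C} (β : IntrinsicBS C T C0 B) {A : C}
    (b : A ⟶ B) (g : B ⟶ B) : Prop :=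
  Imitates β.brel (β.map b) (β.map (b ≫ g))

/-! A diagonal argument in the style of Lawvere's fixed point theorem. Parametrize
`f (a, x) = g (F (x, x))` by a functional total `c : A ⟶ C0` and take `b := F ∘ Δ ∘ c`.
Functional total morphisms have singleton behaviors, so `c` takes a single value `x₀` at `a`.
On the pairs over `(a, x₀)`, `f` behaves like `b ≫ g` at `a`, while the behaviors of
`F ∘ (c ⊗ id)` there together make up that of `b` at `a`; so the imitation of `f` by
`F ∘ (c ⊗ id)` turns into an imitation of `b ≫ g` by `b`. -/

theorem isEnh_iff {X : Type w} (pre : X → X → Prop) (U V : Set X) :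
    IsEnh pre U V ↔ ∀ u ∈ U, ∃ v ∈ V, pre v u := by
  constructor
  · rintro ⟨e, he⟩ u hu
    exact ⟨e ⟨u, hu⟩, (e ⟨u, hu⟩).2, he ⟨u, hu⟩⟩
  · intro h
    choose e he hpre using h
    exact ⟨fun u => ⟨e u u.2, he u u.2⟩, fun u => hpre u u.2⟩

theorem isDeg_iff {X : Type w} (pre : X → X → Prop) (U V : Set X) :
    IsDeg pre U V ↔ ∀ v ∈ V, ∃ u ∈ U, pre v u := by
  constructor
  · rintro ⟨d, hd⟩ v hv
    exact ⟨d ⟨v, hv⟩, (d ⟨v, hv⟩).2, hd ⟨v, hv⟩⟩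
  · intro h
    choose d hd hpre using h
    exact ⟨fun v => ⟨d v v.2, hd v v.2⟩, fun v => hpre v v.2⟩

theorem Imitates.isEnh_isDeg_of_cover {α : Type*} {X : Type w} {pre : X → X → Prop}
    {ν μ : α → Set X} (h : Imitates pre ν μ) {I : Set α} {M N : Set X} (hM : M.Nonempty)
    (hI : I.Nonempty) (hμ : ∀ i ∈ I, μ i = M) (hν : ∀ i ∈ I, ν i ⊆ N)
    (hcover : ∀ v ∈ N, ∃ i ∈ I, v ∈ ν i) :
    IsEnh pre M N ∧ IsDeg pre M N := by
  refine ⟨?_, (isDeg_iff pre M N).2 fun v hv => ?_⟩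
  · obtain ⟨i, hi⟩ := hI
    obtain ⟨henh, -⟩ := h i (hμ i hi ▸ hM)
    rw [isEnh_iff, hμ i hi] at henh
    rw [isEnh_iff]
    intro u hu
    obtain ⟨v, hv, hpre⟩ := henh u hu
    exact ⟨v, hν i hi hv, hpre⟩
  · obtain ⟨i, hi, hvi⟩ := hcover v hv
    obtain ⟨-, hdeg⟩ := h i (hμ i hi ▸ hM)
    rw [isDeg_iff, hμ i hi] at hdeg
    exact hdeg v hvi

namespace GSCat

def fst (A X : C) : A ⊗ X ⟶ A := (A ◁ discard X) ≫ (ρ_ A).hom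

def snd (A X : C) : A ⊗ X ⟶ X := (discard A ▷ X) ≫ (λ_ X).hom

end GSCat

open GSCat

theorem GsTotal.comp {A X Y : C} {f : A ⟶ X} {g : X ⟶ Y} (hf : GsTotal f) (hg : GsTotal g) :
    GsTotal (f ≫ g) := by
  unfold GsTotal at *
  rw [Category.assoc, hg, hf]

theorem gsTotal_copy (A : C) : GsTotal (copy A) := by
  unfold GsTotal
  rw [discard_tensor, MonoidalCategory.tensorHom_def, Category.assoc, leftUnitor_naturality,
    ← Category.assoc (discard A ▷ A), ← Category.assoc, copy_counit_left, Category.id_comp]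

theorem gsTotal_fst (A X : C) : GsTotal (fst A X) := by
  unfold GsTotal fst
  rw [discard_tensor, MonoidalCategory.tensorHom_def', unitors_equal]
  simp only [Category.assoc, rightUnitor_naturality]

theorem gsTotal_snd (A X : C) : GsTotal (snd A X) := by
  unfold GsTotal snd
  rw [discard_tensor, MonoidalCategory.tensorHom_def]
  simp only [Category.assoc, leftUnitor_naturality]

namespace IntrinsicBS

variable {T C0 B : C} (β : IntrinsicBS C T C0 B)

theorem mem_map_comp {A X Y : C} (f : A ⟶ X) (g : X ⟶ Y) (a : β.obj A) (y : β.obj Y) :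
    y ∈ β.map (f ≫ g) a ↔ ∃ x ∈ β.map f a, y ∈ β.map g x := by
  rw [β.map_comp]
  rfl

theorem map_comp_of_map_eq_singleton {A X Y : C} {f : A ⟶ X} {a : β.obj A} {x : β.obj X}
    (hf : β.map f a = {x}) (g : X ⟶ Y) : β.map (f ≫ g) a = β.map g x := by
  ext y
  simp [mem_map_comp, hf]

theorem unitSet_nonempty {A : C} (a : β.obj A) : β.unitSet.Nonempty := by
  obtain ⟨i, hi, -⟩ := (β.mul_right_unit a a).2 rfl
  exact ⟨i, hi⟩

theorem map_nonempty_of_gsTotal {A X : C} {f : A ⟶ X} (hf : GsTotal f) (a : β.obj A) :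
    (β.map f a).Nonempty := by
  obtain ⟨i, hi⟩ := β.unitSet_nonempty a
  rw [← β.map_discard a, ← hf, mem_map_comp] at hi
  obtain ⟨x, hx, -⟩ := hi
  exact ⟨x, hx⟩

theorem mul_nonempty {A X : C} (a : β.obj A) (x : β.obj X) : (β.mul A X a x).Nonempty := by
  obtain ⟨i, hi, z, hz, -⟩ := (β.mul_left_unit x x).2 rfl
  obtain ⟨w, hw, -⟩ := (β.mul_natural (discard A) (𝟙 X) a x z).1
    ⟨i, by rwa [β.map_discard], x, by rw [β.map_id]; rfl, hz⟩
  exact ⟨w, hw⟩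

theorem eq_of_mem_mul_of_mem_map_fst {A X : C} {a : β.obj A} {x : β.obj X}
    {z : β.obj (A ⊗ X)} (hz : z ∈ β.mul A X a x) {w : β.obj A} (hw : w ∈ β.map (fst A X) z) :
    w = a := by
  obtain ⟨y, hy, hwy⟩ := (β.mem_map_comp _ _ z w).1 hw
  rw [← id_tensorHom] at hy
  obtain ⟨a', ha', i, hi, hya⟩ := (β.mul_natural (𝟙 A) (discard X) a x y).2 ⟨z, hz, hy⟩
  rw [β.map_id, Set.mem_singleton_iff] at ha'
  rw [β.map_discard] at hi
  subst ha'
  exact (β.mul_right_unit a' w).1 ⟨i, hi, y, hya, hwy⟩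

theorem eq_of_mem_mul_of_mem_map_snd {A X : C} {a : β.obj A} {x : β.obj X}
    {z : β.obj (A ⊗ X)} (hz : z ∈ β.mul A X a x) {w : β.obj X} (hw : w ∈ β.map (snd A X) z) :
    w = x := by
  obtain ⟨y, hy, hwy⟩ := (β.mem_map_comp _ _ z w).1 hw
  rw [← tensorHom_id] at hy
  obtain ⟨i, hi, x', hx', hyx⟩ := (β.mul_natural (discard A) (𝟙 X) a x y).2 ⟨z, hz, hy⟩
  rw [β.map_id, Set.mem_singleton_iff] at hx'
  rw [β.map_discard] at hi
  subst hx'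
  exact (β.mul_left_unit x' w).1 ⟨i, hi, y, hyx, hwy⟩

theorem eq_of_mem_mul_of_mem_mul {A X : C} {a a' : β.obj A} {x x' : β.obj X}
    {z : β.obj (A ⊗ X)} (h : z ∈ β.mul A X a x) (h' : z ∈ β.mul A X a' x') :
    a = a' ∧ x = x' := by
  obtain ⟨u, hu⟩ := β.map_nonempty_of_gsTotal (gsTotal_fst A X) z
  obtain ⟨w, hw⟩ := β.map_nonempty_of_gsTotal (gsTotal_snd A X) z
  exact ⟨(β.eq_of_mem_mul_of_mem_map_fst h hu).symm.trans (β.eq_of_mem_mul_of_mem_map_fst h' hu),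
    (β.eq_of_mem_mul_of_mem_map_snd h hw).symm.trans (β.eq_of_mem_mul_of_mem_map_snd h' hw)⟩

/-- If `c` took two values `x₀, x₁` at `a`, functionality would put every pair over `(x₀, x₁)`
among the pairs over the diagonal `Δ a`, and pairs determine their coordinates. -/
theorem exists_map_eq_singleton {A X : C} {c : A ⟶ X} (hcf : GsFunctional c)
    (hct : GsTotal c) (a : β.obj A) : ∃ x₀ : β.obj X, β.map c a = {x₀} := by
  obtain ⟨x₀, hx₀⟩ := β.map_nonempty_of_gsTotal hct a
  refine ⟨x₀, Set.eq_singleton_iff_unique_mem.2 ⟨hx₀, fun x₁ hx₁ => ?_⟩⟩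
  obtain ⟨q, hq⟩ := β.mul_nonempty x₀ x₁
  obtain ⟨z, hz, hqz⟩ := (β.mul_natural c c a a q).1 ⟨x₀, hx₀, x₁, hx₁, hq⟩
  have hq_copy : q ∈ β.map (c ≫ copy X) a := by
    rw [hcf, mem_map_comp, β.map_copy]
    exact ⟨z, hz, hqz⟩
  obtain ⟨x₂, -, hq₂⟩ := (β.mem_map_comp _ _ a q).1 hq_copy
  rw [β.map_copy] at hq₂
  obtain ⟨h₀, h₁⟩ := β.eq_of_mem_mul_of_mem_mul hq hq₂
  exact h₁.trans h₀.symm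

theorem map_snd_comp_of_mem_mul {A X Y : C} {a : β.obj A} {x : β.obj X}
    {z : β.obj (A ⊗ X)} (hz : z ∈ β.mul A X a x) (k : X ⟶ Y) :
    β.map (snd A X ≫ k) z = β.map k x := by
  ext y
  rw [mem_map_comp]
  constructor
  · rintro ⟨w, hw, hy⟩
    rwa [β.eq_of_mem_mul_of_mem_map_snd hz hw] at hy
  · intro hy
    obtain ⟨w, hw⟩ := β.map_nonempty_of_gsTotal (gsTotal_snd A X) z
    exact ⟨w, hw, by rwa [β.eq_of_mem_mul_of_mem_map_snd hz hw]⟩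

theorem map_whiskerRight_subset_mul {A Y X : C} {c : A ⟶ Y} {a : β.obj A} {y : β.obj Y}
    (hc : β.map c a = {y}) {x : β.obj X} {z : β.obj (A ⊗ X)} (hz : z ∈ β.mul A X a x) :
    β.map (c ▷ X) z ⊆ β.mul Y X y x := by
  intro q hq
  rw [← tensorHom_id] at hq
  obtain ⟨y', hy', x', hx', hq'⟩ := (β.mul_natural c (𝟙 X) a x q).2 ⟨z, hz, hq⟩
  rw [hc, Set.mem_singleton_iff] at hy'
  rw [β.map_id, Set.mem_singleton_iff] at hx'
  rwa [← hy', ← hx']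

theorem exists_mem_mul_of_mem_mul {A Y X : C} {c : A ⟶ Y} {a : β.obj A} {y : β.obj Y}
    (hy : y ∈ β.map c a) (x : β.obj X) {q : β.obj (Y ⊗ X)} (hq : q ∈ β.mul Y X y x) :
    ∃ z ∈ β.mul A X a x, q ∈ β.map (c ▷ X) z := by
  rw [← tensorHom_id]
  exact (β.mul_natural c (𝟙 X) a x q).1 ⟨y, hy, x, by rw [β.map_id]; rfl, hq⟩

theorem quasiFixed_copy_comp {A X : C} {c : A ⟶ X} (hcf : GsFunctional c) (hct : GsTotal c)
    {F : X ⊗ X ⟶ B} {g : B ⟶ B}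
    (him : Imitates β.brel (β.map ((c ▷ X) ≫ F)) (β.map (snd A X ≫ copy X ≫ F ≫ g))) :
    β.QuasiFixed (c ≫ copy X ≫ F) g := by
  intro a hne
  obtain ⟨x₀, hc⟩ := β.exists_map_eq_singleton hcf hct a
  have hb : β.map (c ≫ copy X ≫ F) a = β.map (copy X ≫ F) x₀ :=
    β.map_comp_of_map_eq_singleton hc _
  have hbg : β.map ((c ≫ copy X ≫ F) ≫ g) a = β.map (copy X ≫ F ≫ g) x₀ := by
    rw [Category.assoc, Category.assoc, β.map_comp_of_map_eq_singleton hc]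
  refine him.isEnh_isDeg_of_cover hne (β.mul_nonempty a x₀)
    (fun z hz => by rw [β.map_snd_comp_of_mem_mul hz, hbg]) (fun z hz v hv => ?_)
    (fun v hv => ?_)
  · obtain ⟨q, hq, hvq⟩ := (β.mem_map_comp _ _ z v).1 hv
    rw [hb, mem_map_comp, β.map_copy]
    exact ⟨q, β.map_whiskerRight_subset_mul hc hz hq, hvq⟩
  · rw [hb, mem_map_comp, β.map_copy] at hv
    obtain ⟨q, hq, hvq⟩ := hv
    obtain ⟨z, hz, hqz⟩ := β.exists_mem_mul_of_mem_mul (hc ▸ Set.mem_singleton x₀) x₀ hq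
    exact ⟨z, hz, (β.mem_map_comp _ _ z v).2 ⟨q, hqz, hvq⟩⟩

end IntrinsicBS

theorem total_fixed_point_general {T C0 B : C} (β : IntrinsicBS C T C0 B)
    {A : C} (F : C0 ⊗ C0 ⟶ B) (hFtotal : GsTotal F)
    (hF : ∀ f : A ⊗ C0 ⟶ B, ∃ cf : A ⟶ C0, GsFunctional cf ∧ GsTotal cf ∧
      Imitates β.brel (β.map ((cf ▷ C0) ≫ F)) (β.map f))
    (g : B ⟶ B) : ∃ b : A ⟶ B, GsTotal b ∧ β.QuasiFixed b g := by
  obtain ⟨c, hcf, hct, him⟩ := hF (snd A C0 ≫ copy C0 ≫ F ≫ g)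
  exact ⟨c ≫ copy C0 ≫ F, hct.comp ((gsTotal_copy C0).comp hFtotal),
    β.quasiFixed_copy_comp hcf hct him⟩

/-- Total fixed points: if moreover `F` is total and the `A`-complete
parametrization is by total (and functional) morphisms, then every `g : B ⟶ B` has a
total quasi-fixed point. -/
theorem total_fixed_point [GsNormalizedCat C] {T C0 B : C} (β : IntrinsicBS C T C0 B)
    {A : C} (F : C0 ⊗ C0 ⟶ B) (hFtotal : GsTotal F)
    (hF : ∀ f : A ⊗ C0 ⟶ B, ∃ cf : A ⟶ C0, GsFunctional cf ∧ GsTotal cf ∧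
      Imitates β.brel (β.map ((cf ▷ C0) ≫ F)) (β.map f))
    (g : B ⟶ B) : ∃ b : A ⟶ B, GsTotal b ∧ β.QuasiFixed b g :=
  total_fixed_point_general β F hFtotal hF g
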